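/- Let C be a ℤ_p-chain complex. (a) If j is odd and ψ ∈ C^j, χ ∈ C^{j+1} satisfy δψ = sχ, then sχ is a cocycle of the d-cochain complex C*_d and p·[sχ]_d = 0 in H^{j+1}_d(C); indeed p·sχ = δ(sψ) with sψ ∈ ker(d). (b) If j is even and ψ ∈ C^j, χ ∈ C^{j+1} satisfy δψ = dχ, then dχ is a cocycle of the s-cochain complex C*_s and p·[dχ]_s = 0 in H^{j+1}_s(C); indeed p·dχ = δ((p−s)ψ) with (p−s)ψ ∈ ker(s). (This expresses that all Smith classes in positive dimensions are p-torsion.) -/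

import Mathlib

/-- A `ℤ_p`-chain complex: a chain complex of abelian groups in nonnegative degrees
together with a chain automorphism `t` with `t^p = id`. -/
structure ZpComplex (p : ℕ) where
  C : ℕ → Type
  [acg : ∀ n, AddCommGroup (C n)]
  bd : ∀ n, C (n + 1) →+ C n
  bd_bd : ∀ n x, bd n (bd (n + 1) x) = 0
  t : ∀ n, C n →+ C n
  t_bd : ∀ n x, t n (bd n x) = bd n (t (n + 1) x)
  t_pow : ∀ n x, (⇑(t n))^[p] x = x

attribute [instance] ZpComplex.acg

namespace ZpComplex

variable {p : ℕ} (X : ZpComplex p)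

/-- degree-`n` integral cochains: `C^n = Hom(C_n, ℤ)` -/
abbrev Co (n : ℕ) := X.C n →+ ℤ

/-- the chain map `t^k` -/
def tpow (n : ℕ) : ℕ → (X.C n →+ X.C n)
  | 0 => AddMonoidHom.id _
  | k + 1 => (X.t n).comp (tpow n k)

/-- `s = 1 + t + ⋯ + t^{p−1}` on chains -/
def sCh (n : ℕ) : X.C n →+ X.C n := ∑ k ∈ Finset.range p, X.tpow n k

/-- `d = 1 − t` on chains -/
def dCh (n : ℕ) : X.C n →+ X.C n := AddMonoidHom.id _ - X.t n

/-- the coboundary `δφ = φ ∘ ∂` -/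
def cb (n : ℕ) : X.Co n →+ X.Co (n + 1) where
  toFun φ := φ.comp (X.bd n)
  map_zero' := by ext x; simp
  map_add' _ _ := by ext x; simp

/-- `s = 1 + t + ⋯ + t^{p−1}` on cochains (`φ ↦ φ ∘ s`) -/
def sCo (n : ℕ) : X.Co n →+ X.Co n where
  toFun φ := φ.comp (X.sCh n)
  map_zero' := by ext x; simp
  map_add' _ _ := by ext x; simp

/-- `d = 1 − t` on cochains (`φ ↦ φ ∘ d`) -/
def dCo (n : ℕ) : X.Co n →+ X.Co n where
  toFun φ := φ.comp (X.dCh n)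
  map_zero' := by ext x; simp
  map_add' _ _ := by ext x; simp

/-- cocycles of the `d`-cochain complex `C*_d = ker d ⊆ C*` -/
def dcocycles (n : ℕ) : AddSubgroup (X.Co n) := (X.dCo n).ker ⊓ (X.cb n).ker

/-- coboundaries of the `d`-cochain complex -/
def dcobds : ∀ n : ℕ, AddSubgroup (X.Co n)
  | 0 => ⊥
  | (j + 1) => AddSubgroup.map (X.cb j) ((X.dCo j).ker)

/-- the `d`-cohomology `H^n_d` -/
abbrev Hd (n : ℕ) := X.dcocycles n ⧸ (X.dcobds n).addSubgroupOf (X.dcocycles n)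

def clsd (n : ℕ) (φ : X.Co n) (h : φ ∈ X.dcocycles n) : X.Hd n :=
  QuotientAddGroup.mk ⟨φ, h⟩

/-- cocycles of the `s`-cochain complex `C*_s = ker s ⊆ C*` -/
def scocycles (n : ℕ) : AddSubgroup (X.Co n) := (X.sCo n).ker ⊓ (X.cb n).ker

/-- coboundaries of the `s`-cochain complex -/
def scobds : ∀ n : ℕ, AddSubgroup (X.Co n)
  | 0 => ⊥
  | (j + 1) => AddSubgroup.map (X.cb j) ((X.sCo j).ker)

/-- the `s`-cohomology `H^n_s` -/
abbrev Hs (n : ℕ) := X.scocycles n ⧸ (X.scobds n).addSubgroupOf (X.scocycles n)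

def clss (n : ℕ) (φ : X.Co n) (h : φ ∈ X.scocycles n) : X.Hs n :=
  QuotientAddGroup.mk ⟨φ, h⟩

end ZpComplex

open ZpComplex


open Finset

section GeomSum

variable {R : Type*} [Ring R] {u : R} {p : ℕ}

theorem geom_sum_mul_one_sub_of_pow_eq_one (h : u ^ p = 1) :
    (∑ i ∈ range p, u ^ i) * (1 - u) = 0 := by
  rw [geom_sum_mul_neg, h, sub_self]

theorem one_sub_mul_geom_sum_of_pow_eq_one (h : u ^ p = 1) :
    (1 - u) * ∑ i ∈ range p, u ^ i = 0 := by
  rw [mul_neg_geom_sum, h, sub_self]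

theorem geom_sum_mul_self_of_pow_eq_one (h : u ^ p = 1) :
    (∑ i ∈ range p, u ^ i) * ∑ i ∈ range p, u ^ i = p • ∑ i ∈ range p, u ^ i := by
  have hu : u * ∑ j ∈ range p, u ^ j = ∑ j ∈ range p, u ^ j := by
    rw [eq_comm, ← sub_eq_zero, ← one_sub_mul, one_sub_mul_geom_sum_of_pow_eq_one h]
  have hpow (i : ℕ) : u ^ i * ∑ j ∈ range p, u ^ j = ∑ j ∈ range p, u ^ j := by
    induction i with
    | zero => rw [pow_zero, one_mul]
    | succ i ih => rw [pow_succ, mul_assoc, hu, ih]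
  rw [sum_mul, sum_congr rfl fun i _ ↦ hpow i, sum_const, card_range]

end GeomSum

namespace ZpComplex

variable {p : ℕ} (X : ZpComplex p)

/-- `t` as an element of the ring `AddMonoid.End (C n)`, where `^` and `*` are available. -/
abbrev tEnd (n : ℕ) : AddMonoid.End (X.C n) := X.t n

theorem tpow_eq_pow (n k : ℕ) : X.tpow n k = X.tEnd n ^ k := by
  induction k with
  | zero => rfl
  | succ k ih => rw [pow_succ', ← ih]; rfl

theorem tEnd_pow_p (n : ℕ) : X.tEnd n ^ p = 1 := by
  ext x
  rw [AddMonoid.End.coe_pow]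
  exact X.t_pow n x

theorem sCh_eq_geom_sum (n : ℕ) : X.sCh n = ∑ k ∈ range p, X.tEnd n ^ k := by
  simp only [sCh, tpow_eq_pow]
  rfl

theorem coe_tpow (n k : ℕ) : ⇑(X.tpow n k) = (⇑(X.t n))^[k] := by
  rw [tpow_eq_pow]
  exact AddMonoid.End.coe_pow _ _ _

theorem sCh_comp_dCh (n : ℕ) : (X.sCh n).comp (X.dCh n) = 0 := by
  rw [sCh_eq_geom_sum]
  exact geom_sum_mul_one_sub_of_pow_eq_one (X.tEnd_pow_p n)

theorem dCh_comp_sCh (n : ℕ) : (X.dCh n).comp (X.sCh n) = 0 := by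
  rw [sCh_eq_geom_sum]
  exact one_sub_mul_geom_sum_of_pow_eq_one (X.tEnd_pow_p n)

theorem sCh_comp_sCh (n : ℕ) : (X.sCh n).comp (X.sCh n) = p • X.sCh n := by
  rw [sCh_eq_geom_sum]
  exact geom_sum_mul_self_of_pow_eq_one (X.tEnd_pow_p n)

theorem sCh_bd (n : ℕ) (x : X.C (n + 1)) :
    X.sCh n (X.bd n x) = X.bd n (X.sCh (n + 1) x) := by
  have hsemi (k : ℕ) : Function.Semiconj (X.bd n) (X.t (n + 1))^[k] (X.t n)^[k] :=
    Function.Semiconj.iterate_right (fun y ↦ (X.t_bd n y).symm) k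
  simp only [sCh, AddMonoidHom.finsetSum_apply, coe_tpow, map_sum, (hsemi _).eq]

theorem dCo_sCo (n : ℕ) (φ : X.Co n) : X.dCo n (X.sCo n φ) = 0 := by
  change φ.comp ((X.sCh n).comp (X.dCh n)) = 0
  rw [sCh_comp_dCh, AddMonoidHom.comp_zero]

theorem sCo_dCo (n : ℕ) (φ : X.Co n) : X.sCo n (X.dCo n φ) = 0 := by
  change φ.comp ((X.dCh n).comp (X.sCh n)) = 0
  rw [dCh_comp_sCh, AddMonoidHom.comp_zero]

theorem sCo_sCo (n : ℕ) (φ : X.Co n) : X.sCo n (X.sCo n φ) = p • X.sCo n φ := by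
  change φ.comp ((X.sCh n).comp (X.sCh n)) = p • φ.comp (X.sCh n)
  rw [sCh_comp_sCh]
  ext x
  exact map_nsmul φ p (X.sCh n x)

theorem cb_sCo (n : ℕ) (φ : X.Co n) : X.cb n (X.sCo n φ) = X.sCo (n + 1) (X.cb n φ) := by
  ext x
  exact congrArg φ (X.sCh_bd n x)

theorem cb_cb (n : ℕ) (φ : X.Co n) : X.cb (n + 1) (X.cb n φ) = 0 := by
  ext x
  change φ (X.bd n (X.bd (n + 1) x)) = 0
  rw [X.bd_bd, map_zero]

theorem nsmul_clsd_eq_zero {n m : ℕ} {φ : X.Co n} (h : φ ∈ X.dcocycles n)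
    (hm : m • φ ∈ X.dcobds n) : m • X.clsd n φ h = 0 := by
  rw [clsd, ← QuotientAddGroup.mk_nsmul, QuotientAddGroup.eq_zero_iff,
    AddSubgroup.mem_addSubgroupOf]
  exact hm

theorem nsmul_clss_eq_zero {n m : ℕ} {φ : X.Co n} (h : φ ∈ X.scocycles n)
    (hm : m • φ ∈ X.scobds n) : m • X.clss n φ h = 0 := by
  rw [clss, ← QuotientAddGroup.mk_nsmul, QuotientAddGroup.eq_zero_iff,
    AddSubgroup.mem_addSubgroupOf]
  exact hm

variable {X} {j : ℕ} {ψ : X.Co j} {χ : X.Co (j + 1)}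

theorem sCo_mem_dcocycles_of_cb_eq (h : X.cb j ψ = X.sCo (j + 1) χ) :
    X.sCo (j + 1) χ ∈ X.dcocycles (j + 1) :=
  AddSubgroup.mem_inf.mpr ⟨X.dCo_sCo _ χ, by rw [AddMonoidHom.mem_ker, ← h, cb_cb]⟩

theorem nsmul_sCo_eq_cb_sCo (h : X.cb j ψ = X.sCo (j + 1) χ) :
    p • X.sCo (j + 1) χ = X.cb j (X.sCo j ψ) := by
  rw [cb_sCo, h, sCo_sCo]

theorem dCo_mem_scocycles_of_cb_eq (h : X.cb j ψ = X.dCo (j + 1) χ) :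
    X.dCo (j + 1) χ ∈ X.scocycles (j + 1) :=
  AddSubgroup.mem_inf.mpr ⟨X.sCo_dCo _ χ, by rw [AddMonoidHom.mem_ker, ← h, cb_cb]⟩

theorem nsmul_sub_sCo_mem_ker_sCo (ψ : X.Co j) : p • ψ - X.sCo j ψ ∈ (X.sCo j).ker := by
  rw [AddMonoidHom.mem_ker, map_sub, map_nsmul, sCo_sCo, sub_self]

theorem nsmul_dCo_eq_cb_nsmul_sub_sCo (h : X.cb j ψ = X.dCo (j + 1) χ) :
    p • X.dCo (j + 1) χ = X.cb j (p • ψ - X.sCo j ψ) := by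
  rw [map_sub, map_nsmul, cb_sCo, h, sCo_dCo, sub_zero]

end ZpComplex

theorem smith_classes_are_p_torsion_general
    (p : ℕ) (X : ZpComplex p) :
    (∀ j : ℕ, Odd j → ∀ (ψ : X.Co j) (χ : X.Co (j + 1)),
      X.cb j ψ = X.sCo (j + 1) χ →
        (X.sCo (j + 1) χ ∈ X.dcocycles (j + 1)) ∧
        (∀ hm : X.sCo (j + 1) χ ∈ X.dcocycles (j + 1),
          p • X.clsd (j + 1) (X.sCo (j + 1) χ) hm = 0) ∧
        p • X.sCo (j + 1) χ = X.cb j (X.sCo j ψ) ∧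
        X.sCo j ψ ∈ (X.dCo j).ker)
    ∧
    (∀ j : ℕ, Even j → ∀ (ψ : X.Co j) (χ : X.Co (j + 1)),
      X.cb j ψ = X.dCo (j + 1) χ →
        (X.dCo (j + 1) χ ∈ X.scocycles (j + 1)) ∧
        (∀ hm : X.dCo (j + 1) χ ∈ X.scocycles (j + 1),
          p • X.clss (j + 1) (X.dCo (j + 1) χ) hm = 0) ∧
        p • X.dCo (j + 1) χ = X.cb j (p • ψ - X.sCo j ψ) ∧
        (p • ψ - X.sCo j ψ) ∈ (X.sCo j).ker) := by
  refine ⟨fun j _ ψ χ h ↦ ?_, fun j _ ψ χ h ↦ ?_⟩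
  · have hbd := nsmul_sCo_eq_cb_sCo h
    exact ⟨sCo_mem_dcocycles_of_cb_eq h,
      fun hm ↦ X.nsmul_clsd_eq_zero hm ⟨_, X.dCo_sCo j ψ, hbd.symm⟩, hbd, X.dCo_sCo j ψ⟩
  · have hbd := nsmul_dCo_eq_cb_nsmul_sub_sCo h
    exact ⟨dCo_mem_scocycles_of_cb_eq h,
      fun hm ↦ X.nsmul_clss_eq_zero hm ⟨_, nsmul_sub_sCo_mem_ker_sCo ψ, hbd.symm⟩, hbd,
      nsmul_sub_sCo_mem_ker_sCo ψ⟩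

/-- **Smith classes in positive dimensions are `p`-torsion.**
Let `C` be a `ℤ_p`-chain complex.
(a) If `j` is odd and `ψ ∈ C^j`, `χ ∈ C^{j+1}` satisfy `δψ = sχ`, then `sχ` is a cocycle
of the `d`-cochain complex `C*_d` and `p·[sχ]_d = 0` in `H^{j+1}_d(C)`; indeed
`p·sχ = δ(sψ)` with `sψ ∈ ker d`.
(b) If `j` is even and `ψ ∈ C^j`, `χ ∈ C^{j+1}` satisfy `δψ = dχ`, then `dχ` is a
cocycle of the `s`-cochain complex `C*_s` and `p·[dχ]_s = 0` in `H^{j+1}_s(C)`; indeed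
`p·dχ = δ((p−s)ψ)` with `(p−s)ψ ∈ ker s`. -/
theorem smith_classes_are_p_torsion
    (p : ℕ) (hp : p.Prime) (X : ZpComplex p) :
    (∀ j : ℕ, Odd j → ∀ (ψ : X.Co j) (χ : X.Co (j + 1)),
      X.cb j ψ = X.sCo (j + 1) χ →
        (X.sCo (j + 1) χ ∈ X.dcocycles (j + 1)) ∧
        (∀ hm : X.sCo (j + 1) χ ∈ X.dcocycles (j + 1),
          p • X.clsd (j + 1) (X.sCo (j + 1) χ) hm = 0) ∧
        p • X.sCo (j + 1) χ = X.cb j (X.sCo j ψ) ∧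
        X.sCo j ψ ∈ (X.dCo j).ker)
    ∧
    (∀ j : ℕ, Even j → ∀ (ψ : X.Co j) (χ : X.Co (j + 1)),
      X.cb j ψ = X.dCo (j + 1) χ →
        (X.dCo (j + 1) χ ∈ X.scocycles (j + 1)) ∧
        (∀ hm : X.dCo (j + 1) χ ∈ X.scocycles (j + 1),
          p • X.clss (j + 1) (X.dCo (j + 1) χ) hm = 0) ∧
        p • X.dCo (j + 1) χ = X.cb j (p • ψ - X.sCo j ψ) ∧
        (p • ψ - X.sCo j ψ) ∈ (X.sCo j).ker) :=
  smith_classes_are_p_torsion_general p X
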